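/- Let B₁ and B₂ be Boolean algebras and h : B₁ → B₂ a Boolean homomorphism. Then for every A ⊆ Uf(B₁), the canonical extension satisfies h^σ(A) = {v ∈ Uf(B₂) : h⁻¹(v) ∈ A}, i.e. h^σ(A) is the preimage of A under the dual map h_* : Uf(B₂) → Uf(B₁), h_*(v) = h⁻¹(v). -/

import Mathlib

/-- A (lattice) filter of a Boolean algebra: a nonempty, upward-closed subset
closed under binary meets. -/
def IsLatFilter {B : Type*} [BooleanAlgebra B] (F : Set B) : Prop :=
  F.Nonempty ∧ (∀ a b : B, a ∈ F → a ≤ b → b ∈ F) ∧ (∀ a b : B, a ∈ F → b ∈ F → a ⊓ b ∈ F)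

/-- A (lattice) ideal of a Boolean algebra: a nonempty, downward-closed subset
closed under binary joins. -/
def IsLatIdeal {B : Type*} [BooleanAlgebra B] (I : Set B) : Prop :=
  I.Nonempty ∧ (∀ a b : B, a ∈ I → b ≤ a → b ∈ I) ∧ (∀ a b : B, a ∈ I → b ∈ I → a ⊔ b ∈ I)

/-- An ultrafilter of a Boolean algebra: a maximal proper filter. -/
def IsUf {B : Type*} [BooleanAlgebra B] (F : Set B) : Prop :=
  IsLatFilter F ∧ F ≠ Set.univ ∧
    ∀ G : Set B, IsLatFilter G → G ≠ Set.univ → F ⊆ G → F = G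

/-- `Uf B` is the set (type) of ultrafilters of the Boolean algebra `B`. -/
def Uf (B : Type*) [BooleanAlgebra B] : Type _ := {F : Set B // IsUf F}

/-- The Stone map `φ_B : B → 𝒫(Uf B)`, `φ_B a = {u ∈ Uf B : a ∈ u}`. -/
def stoneMap (B : Type*) [BooleanAlgebra B] : B → Set (Uf B) := fun a => {u : Uf B | a ∈ u.1}

/-- The canonical extension of a map `h : B₁ → B₂`:
`h^σ(A) = ⋃ { ⋂_{a ∈ F} φ₂(h a) : F a filter of B₁ with ⋂_{a ∈ F} φ₁ a ⊆ A }`. -/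
def canExt {B₁ B₂ : Type*} [BooleanAlgebra B₁] [BooleanAlgebra B₂] (h : B₁ → B₂)
    (A : Set (Uf B₁)) : Set (Uf B₂) :=
  ⋃ F ∈ {F : Set B₁ | IsLatFilter F ∧ (⋂ a ∈ F, stoneMap B₁ a) ⊆ A},
    ⋂ a ∈ F, stoneMap B₂ (h a)

section

variable {B B₁ B₂ : Type*} [BooleanAlgebra B] [BooleanAlgebra B₁] [BooleanAlgebra B₂]

theorem Uf.eq_of_subset {u w : Uf B} (h : u.1 ⊆ w.1) : u = w :=
  Subtype.ext (u.2.2.2 w.1 w.2.1 w.2.2.1 h)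

theorem mem_iInter_stoneMap_iff {F : Set B} {u : Uf B} :
    u ∈ ⋂ a ∈ F, stoneMap B a ↔ F ⊆ u.1 :=
  Set.mem_iInter₂

theorem iInter_stoneMap_eq_singleton (u : Uf B) : ⋂ a ∈ u.1, stoneMap B a = {u} :=
  Set.ext fun _ => mem_iInter_stoneMap_iff.trans
    ⟨fun h => (Uf.eq_of_subset h).symm, fun h => h ▸ subset_rfl⟩

theorem mem_canExt_iff (h : B₁ → B₂) (A : Set (Uf B₁)) (v : Uf B₂) :
    v ∈ canExt h A ↔ ∃ F, IsLatFilter F ∧ ⋂ a ∈ F, stoneMap B₁ a ⊆ A ∧ F ⊆ h ⁻¹' v.1 := by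
  simp only [canExt, Set.mem_iUnion, exists_prop, Set.mem_ofPred_eq, and_assoc]
  exact exists_congr fun _ => and_congr_right' <| and_congr_right' Set.mem_iInter₂

/-- Every witness filter `F` lies in `u`, so `u ∈ ⋂_{a ∈ F} φ a ⊆ A`; conversely `u` is itself a
witness, its Stone intersection being `{u}` by maximality. -/
theorem mem_canExt_iff_of_preimage_eq (h : B₁ → B₂) (A : Set (Uf B₁)) {v : Uf B₂} {u : Uf B₁}
    (hu : u.1 = h ⁻¹' v.1) : v ∈ canExt h A ↔ u ∈ A := by
  rw [mem_canExt_iff]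
  constructor
  · rintro ⟨F, -, hFA, hFv⟩
    exact hFA (mem_iInter_stoneMap_iff.2 (hu ▸ hFv))
  · intro huA
    refine ⟨u.1, u.2.1, ?_, hu.le⟩
    rw [iInter_stoneMap_eq_singleton]
    exact Set.singleton_subset_iff.2 huA

end

/-- For a Boolean homomorphism `h : B₁ → B₂` and every `A ⊆ Uf B₁`,
`h^σ(A) = {v ∈ Uf B₂ : h⁻¹ v ∈ A}`, i.e. `h^σ(A)` is the preimage of `A` under the dual map
`h_* : Uf B₂ → Uf B₁`, `h_* v = h⁻¹ v`. -/
theorem canExt_eq_preimage_dual {B₁ B₂ : Type*}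
    [BooleanAlgebra B₁] [BooleanAlgebra B₂] (h : BoundedLatticeHom B₁ B₂)
    (hdual : Uf B₂ → Uf B₁) (hdual_spec : ∀ v : Uf B₂, (hdual v).1 = (⇑h) ⁻¹' v.1)
    (A : Set (Uf B₁)) :
    canExt (⇑h) A = hdual ⁻¹' A :=
  Set.ext fun v => mem_canExt_iff_of_preimage_eq h A (hdual_spec v)
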